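/- Let w ∈ A₂ on ℝ. Then for every dyadic interval J: Σ_{K⊆J} |⟨w^{1/2}, h_{K₋}⟩ ⟨w^{-1/2}, h_K⟩| ≤ [w]_{A₂}^{1/2} |J|, where K₋ is the left half of K. -/

import Mathlib

open MeasureTheory Set
open scoped ENNReal

noncomputable section

/-- The dyadic interval `[k·2^n, (k+1)·2^n)` encoded by the pair `p = (n, k)`. -/
def dyad (p : ℤ × ℤ) : Set ℝ := Set.Ico ((p.2 : ℝ) * 2 ^ p.1) (((p.2 : ℝ) + 1) * 2 ^ p.1)

/-- Left half of a dyadic interval. -/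
def dLeft (p : ℤ × ℤ) : ℤ × ℤ := (p.1 - 1, 2 * p.2)

/-- Right half of a dyadic interval. -/
def dRight (p : ℤ × ℤ) : ℤ × ℤ := (p.1 - 1, 2 * p.2 + 1)

/-- Dyadic parent. -/
def dParent (p : ℤ × ℤ) : ℤ × ℤ := (p.1 + 1, Int.fdiv p.2 2)

/-- Length of the dyadic interval. -/
def dLen (p : ℤ × ℤ) : ℝ := 2 ^ p.1

/-- The L²-normalized Haar function `h_I = |I|^{-1/2}(1_{I₋} - 1_{I₊})`. -/
def haarF (p : ℤ × ℤ) : ℝ → ℝ := fun x =>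
  (Real.sqrt (dLen p))⁻¹ *
    ((dyad (dLeft p)).indicator (fun _ => (1 : ℝ)) x -
      (dyad (dRight p)).indicator (fun _ => (1 : ℝ)) x)

/-- The averaging function `h_I^1 = |I|^{-1} 1_I`. -/
def haarAvg (p : ℤ × ℤ) : ℝ → ℝ := fun x =>
  (dLen p)⁻¹ * (dyad p).indicator (fun _ => (1 : ℝ)) x

/-- Haar coefficient `⟨f, h_I⟩`. -/
def hc (f : ℝ → ℝ) (p : ℤ × ℤ) : ℝ := ∫ x, f x * haarF p x

/-- Average `⟨f⟩_I = |I|⁻¹ ∫_I f`. -/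
def avg (f : ℝ → ℝ) (p : ℤ × ℤ) : ℝ := (dLen p)⁻¹ * ∫ x in dyad p, f x

open Classical in
/-- `δ(J, I) = 1` if `J ⊆ I₋` and `-1` otherwise (in particular if `J ⊆ I₊`). -/
def dsgn (q p : ℤ × ℤ) : ℝ := if dyad q ⊆ dyad (dLeft p) then 1 else -1

/-- `𝔰(J) = √2 · Σ_{K : K₋ ⊋ J} |K|⁻¹`. -/
def sfrak (p : ℤ × ℤ) : ℝ :=
  Real.sqrt 2 * ∑' q : {q : ℤ × ℤ // dyad p ⊂ dyad (dLeft q)}, (dLen q.1)⁻¹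

/-!
Two distinct Haar functions either have disjoint supports or one of them is constant on the
support of the other, so the Haar functions are orthonormal in `L²(ℝ)`; and the Haar coefficients
of `f` at intervals inside `J` only see `f · 1_J`. Cauchy–Schwarz, followed by Bessel's inequality
for `w^{1/2} 1_J` (over the left halves `K₋`, distinct for distinct `K`) and for `w^{-1/2} 1_J`,
bounds the sum by `(∫_J w)^{1/2} (∫_J w⁻¹)^{1/2} ≤ [w]_{A₂}^{1/2} |J|`.
-/

lemma dLen_pos (p : ℤ × ℤ) : 0 < dLen p := zpow_pos two_pos p.1

lemma dLen_dLeft_add_dLen_dRight (p : ℤ × ℤ) : dLen (dLeft p) + dLen (dRight p) = dLen p := by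
  simp only [dLen, dLeft, dRight]
  rw [← two_mul, ← zpow_one_add₀ two_ne_zero, add_sub_cancel]

lemma measurableSet_dyad (p : ℤ × ℤ) : MeasurableSet (dyad p) := measurableSet_Ico

lemma volume_dyad (p : ℤ × ℤ) : volume (dyad p) = ENNReal.ofReal (dLen p) := by
  rw [dyad, Real.volume_Ico, dLen]
  ring_nf

lemma volume_dyad_ne_top (p : ℤ × ℤ) : volume (dyad p) ≠ ⊤ := by
  rw [volume_dyad]
  exact ENNReal.ofReal_ne_top

lemma mem_dyad_iff {x : ℝ} {p : ℤ × ℤ} : x ∈ dyad p ↔ ⌊x / 2 ^ p.1⌋ = p.2 := by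
  have h := zpow_pos (two_pos : (0 : ℝ) < 2) p.1
  rw [Int.floor_eq_iff, le_div_iff₀ h, div_lt_iff₀ h]
  rfl

/-- Membership in a coarser dyadic interval is decided by the index of a finer one. -/
lemma floor_div_two_zpow_of_mem_dyad {x : ℝ} {p : ℤ × ℤ} {n : ℤ} (hx : x ∈ dyad p)
    (hn : p.1 ≤ n) : ⌊x / 2 ^ n⌋ = p.2 / 2 ^ (n - p.1).toNat := by
  have hsplit : (2 : ℝ) ^ n = 2 ^ p.1 * ((2 ^ (n - p.1).toNat : ℕ) : ℝ) := by
    rw [Nat.cast_pow, Nat.cast_ofNat, ← zpow_natCast, ← zpow_add₀ two_ne_zero]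
    congr 1
    omega
  rw [hsplit, ← div_div, Int.floor_div_natCast, mem_dyad_iff.mp hx]
  norm_cast

lemma dyad_subset_or_disjoint {p q : ℤ × ℤ} (h : p.1 ≤ q.1) :
    dyad p ⊆ dyad q ∨ Disjoint (dyad p) (dyad q) := by
  by_cases hq : p.2 / 2 ^ (q.1 - p.1).toNat = q.2
  · refine Or.inl fun x hx => ?_
    rw [mem_dyad_iff, floor_div_two_zpow_of_mem_dyad hx h, hq]
  · refine Or.inr (Set.disjoint_left.mpr fun x hx hxq => hq ?_)
    rw [← floor_div_two_zpow_of_mem_dyad hx h, mem_dyad_iff.mp hxq]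

lemma disjoint_dyad_of_fst_eq {p q : ℤ × ℤ} (h : p.1 = q.1) (hpq : p ≠ q) :
    Disjoint (dyad p) (dyad q) :=
  Set.disjoint_left.mpr fun x hxp hxq =>
    hpq (Prod.ext h (by rw [← mem_dyad_iff.mp hxp, ← mem_dyad_iff.mp hxq, h]))

lemma dyad_dLeft_subset (p : ℤ × ℤ) : dyad (dLeft p) ⊆ dyad p := fun x hx => by
  rw [mem_dyad_iff, floor_div_two_zpow_of_mem_dyad hx (by simp [dLeft])]
  simp [dLeft]

lemma dyad_dRight_subset (p : ℤ × ℤ) : dyad (dRight p) ⊆ dyad p := fun x hx => by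
  rw [mem_dyad_iff, floor_div_two_zpow_of_mem_dyad hx (by simp [dRight])]
  simp [dRight]
  omega

lemma disjoint_dyad_dLeft_dRight (p : ℤ × ℤ) : Disjoint (dyad (dLeft p)) (dyad (dRight p)) :=
  disjoint_dyad_of_fst_eq rfl fun h => by simp [dLeft, dRight] at h

lemma dLeft_injective : Function.Injective dLeft := fun p q h => by
  simp only [dLeft, Prod.mk.injEq] at h
  exact Prod.ext (by omega) (by omega)

section Haar

open scoped InnerProductSpace

lemma haarF_eq_zero_of_notMem {p : ℤ × ℤ} {x : ℝ} (h : x ∉ dyad p) : haarF p x = 0 := by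
  have hL : x ∉ dyad (dLeft p) := fun hx => h (dyad_dLeft_subset p hx)
  have hR : x ∉ dyad (dRight p) := fun hx => h (dyad_dRight_subset p hx)
  simp [haarF, Set.indicator_of_notMem hL, Set.indicator_of_notMem hR]

lemma memLp_indicator_one_dyad (p : ℤ × ℤ) :
    MemLp ((dyad p).indicator fun _ => (1 : ℝ)) 2 volume :=
  memLp_indicator_const 2 (measurableSet_dyad p) 1 (Or.inr (volume_dyad_ne_top p))

lemma integral_indicator_one_dyad (p : ℤ × ℤ) :
    ∫ x, (dyad p).indicator (fun _ => (1 : ℝ)) x = dLen p := by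
  rw [integral_indicator_const _ (measurableSet_dyad p), measureReal_def, volume_dyad,
    ENNReal.toReal_ofReal (dLen_pos p).le, smul_eq_mul, mul_one]

lemma integrable_indicator_one_dyad (p : ℤ × ℤ) :
    Integrable ((dyad p).indicator fun _ => (1 : ℝ)) volume :=
  (integrable_indicator_iff (measurableSet_dyad p)).2 (integrableOn_const (volume_dyad_ne_top p))

lemma memLp_haarF (p : ℤ × ℤ) : MemLp (haarF p) 2 volume :=
  ((memLp_indicator_one_dyad _).sub (memLp_indicator_one_dyad _)).const_mul _

lemma integral_haarF (p : ℤ × ℤ) : ∫ x, haarF p x = 0 := by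
  unfold haarF
  rw [integral_const_mul, integral_sub (integrable_indicator_one_dyad _)
    (integrable_indicator_one_dyad _), integral_indicator_one_dyad,
    integral_indicator_one_dyad, show dLen (dLeft p) = dLen (dRight p) from rfl, sub_self,
    mul_zero]

lemma integral_haarF_mul_self (p : ℤ × ℤ) : ∫ x, haarF p x * haarF p x = 1 := by
  have hs : (Real.sqrt (dLen p))⁻¹ * (Real.sqrt (dLen p))⁻¹ = (dLen p)⁻¹ := by
    rw [← mul_inv, Real.mul_self_sqrt (dLen_pos p).le]
  have hsq : ∀ x, haarF p x * haarF p x = (dLen p)⁻¹ *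
      ((dyad (dLeft p)).indicator (fun _ => (1 : ℝ)) x +
        (dyad (dRight p)).indicator (fun _ => (1 : ℝ)) x) := fun x => by
    by_cases hL : x ∈ dyad (dLeft p)
    · have hR := (disjoint_dyad_dLeft_dRight p).notMem_of_mem_left hL
      simp [haarF, hL, hR, hs]
    · by_cases hR : x ∈ dyad (dRight p) <;> simp [haarF, hL, hR, hs]
  rw [integral_congr_ae (Filter.Eventually.of_forall hsq), integral_const_mul,
    integral_add (integrable_indicator_one_dyad _) (integrable_indicator_one_dyad _),
    integral_indicator_one_dyad, integral_indicator_one_dyad, dLen_dLeft_add_dLen_dRight,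
    inv_mul_cancel₀ (dLen_pos p).ne']

lemma exists_haarF_eqOn_dyad {p q : ℤ × ℤ} (h : p.1 < q.1) :
    ∃ c, ∀ x ∈ dyad p, haarF q x = c := by
  have hconst : ∀ r : ℤ × ℤ, p.1 ≤ r.1 →
      ∃ c, ∀ x ∈ dyad p, (dyad r).indicator (fun _ => (1 : ℝ)) x = c := fun r hr =>
    (dyad_subset_or_disjoint hr).elim
      (fun hs => ⟨1, fun x hx => Set.indicator_of_mem (hs hx) _⟩)
      (fun hd => ⟨0, fun x hx => Set.indicator_of_notMem (hd.notMem_of_mem_left hx) _⟩)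
  obtain ⟨a, ha⟩ := hconst (dLeft q) (by simp only [dLeft]; omega)
  obtain ⟨b, hb⟩ := hconst (dRight q) (by simp only [dRight]; omega)
  exact ⟨(Real.sqrt (dLen q))⁻¹ * (a - b), fun x hx => by rw [haarF, ha x hx, hb x hx]⟩

lemma integral_haarF_mul_of_fst_lt {p q : ℤ × ℤ} (h : p.1 < q.1) :
    ∫ x, haarF p x * haarF q x = 0 := by
  obtain ⟨c, hc⟩ := exists_haarF_eqOn_dyad h
  have hpq : ∀ x, haarF p x * haarF q x = haarF p x * c := fun x => by
    by_cases hx : x ∈ dyad p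
    · rw [hc x hx]
    · rw [haarF_eq_zero_of_notMem hx, zero_mul, zero_mul]
  simp only [hpq, integral_mul_const, integral_haarF, zero_mul]

lemma integral_haarF_mul_of_ne {p q : ℤ × ℤ} (hpq : p ≠ q) :
    ∫ x, haarF p x * haarF q x = 0 := by
  rcases lt_trichotomy p.1 q.1 with h | h | h
  · exact integral_haarF_mul_of_fst_lt h
  · have hzero : ∀ x, haarF p x * haarF q x = 0 := fun x => by
      by_cases hx : x ∈ dyad p
      · rw [haarF_eq_zero_of_notMem ((disjoint_dyad_of_fst_eq h hpq).notMem_of_mem_left hx),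
          mul_zero]
      · rw [haarF_eq_zero_of_notMem hx, zero_mul]
    simp only [hzero, integral_zero]
  · simpa only [mul_comm] using integral_haarF_mul_of_fst_lt h

def haarLp (p : ℤ × ℤ) : Lp ℝ 2 (volume : Measure ℝ) := (memLp_haarF p).toLp (haarF p)

lemma inner_haarLp_toLp {f : ℝ → ℝ} (hf : MemLp f 2 volume) (q : ℤ × ℤ) :
    ⟪haarLp q, hf.toLp f⟫_ℝ = hc f q := by
  rw [L2.inner_def, hc]
  refine integral_congr_ae ?_
  filter_upwards [(memLp_haarF q).coeFn_toLp, hf.coeFn_toLp] with x hx hy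
  simp [haarLp, hx, hy]

lemma orthonormal_haarLp : Orthonormal ℝ haarLp := by
  rw [orthonormal_iff_ite]
  intro p q
  rw [show haarLp q = (memLp_haarF q).toLp (haarF q) from rfl, inner_haarLp_toLp, hc]
  split_ifs with h
  · rw [h, integral_haarF_mul_self]
  · exact integral_haarF_mul_of_ne (Ne.symm h)

lemma sum_hc_sq_le_integral_sq {f : ℝ → ℝ} (hf : MemLp f 2 volume) (G : Finset (ℤ × ℤ)) :
    ∑ q ∈ G, hc f q ^ 2 ≤ ∫ x, f x ^ 2 := by
  have hnorm : ‖hf.toLp f‖ ^ 2 = ∫ x, f x ^ 2 := by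
    rw [← real_inner_self_eq_norm_sq, L2.inner_def]
    refine integral_congr_ae ?_
    filter_upwards [hf.coeFn_toLp] with x hx
    simp [hx, sq]
  simpa only [inner_haarLp_toLp, Real.norm_eq_abs, sq_abs, hnorm] using
    orthonormal_haarLp.sum_inner_products_le (s := G) (hf.toLp f)

end Haar

lemma hc_indicator_dyad {f : ℝ → ℝ} {p q : ℤ × ℤ} (h : dyad q ⊆ dyad p) :
    hc ((dyad p).indicator f) q = hc f q := by
  refine integral_congr_ae (Filter.Eventually.of_forall fun x => ?_)
  by_cases hx : x ∈ dyad p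
  · simp only [Set.indicator_of_mem hx]
  · simp only [Set.indicator_of_notMem hx, haarF_eq_zero_of_notMem (fun hq => hx (h hq)),
      mul_zero]

lemma sum_hc_sq_le_setIntegral_sq {f : ℝ → ℝ} {p : ℤ × ℤ}
    (hf : MemLp f 2 (volume.restrict (dyad p))) (G : Finset (ℤ × ℤ))
    (hG : ∀ q ∈ G, dyad q ⊆ dyad p) :
    ∑ q ∈ G, hc f q ^ 2 ≤ ∫ x in dyad p, f x ^ 2 := by
  have hbessel := sum_hc_sq_le_integral_sq
    ((memLp_indicator_iff_restrict (measurableSet_dyad p)).2 hf) G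
  rw [Finset.sum_congr rfl fun q hq => by rw [hc_indicator_dyad (hG q hq)]] at hbessel
  have hsq : ∀ x, (dyad p).indicator f x ^ 2 = (dyad p).indicator (fun x => f x ^ 2) x :=
    fun x => by by_cases hx : x ∈ dyad p <;> simp [hx]
  simpa only [← integral_indicator (measurableSet_dyad p), hsq] using hbessel

lemma sum_hc_sqrt_sq_le_setIntegral {g : ℝ → ℝ} {p : ℤ × ℤ} (hg0 : ∀ x, 0 ≤ g x)
    (hg : IntegrableOn g (dyad p)) (G : Finset (ℤ × ℤ)) (hG : ∀ q ∈ G, dyad q ⊆ dyad p) :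
    ∑ q ∈ G, hc (fun x => Real.sqrt (g x)) q ^ 2 ≤ ∫ x in dyad p, g x := by
  have hsq : ∀ x, Real.sqrt (g x) ^ 2 = g x := fun x => Real.sq_sqrt (hg0 x)
  have hmem : MemLp (fun x => Real.sqrt (g x)) 2 (volume.restrict (dyad p)) := by
    rw [memLp_two_iff_integrable_sq
      (Real.continuous_sqrt.comp_aestronglyMeasurable hg.aestronglyMeasurable)]
    simp only [hsq]
    exact hg
  simpa only [hsq] using sum_hc_sq_le_setIntegral_sq hmem G hG

lemma integrableOn_dyad {f : ℝ → ℝ} (hf : LocallyIntegrable f volume) (p : ℤ × ℤ) :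
    IntegrableOn f (dyad p) :=
  (hf.integrableOn_isCompact isCompact_Icc).mono_set Set.Ico_subset_Icc_self

lemma setIntegral_mul_setIntegral_le_of_avg_mul_avg_le {f g : ℝ → ℝ} {p : ℤ × ℤ} {A : ℝ}
    (h : avg f p * avg g p ≤ A) :
    (∫ x in dyad p, f x) * (∫ x in dyad p, g x) ≤ A * dLen p ^ 2 := by
  have hL := dLen_pos p
  calc (∫ x in dyad p, f x) * (∫ x in dyad p, g x) = avg f p * avg g p * dLen p ^ 2 := by
        simp only [avg]
        field_simp
    _ ≤ A * dLen p ^ 2 := by gcongr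

theorem statement8_general (w : ℝ → ℝ) (hw : ∀ x, 0 < w x)
    (hwloc : LocallyIntegrable w volume)
    (hwinv : LocallyIntegrable (fun x => (w x)⁻¹) volume)
    (A : ℝ)
    (hA : ∀ p : ℤ × ℤ, avg w p * avg (fun x => (w x)⁻¹) p ≤ A)
    (p : ℤ × ℤ) (F : Finset (ℤ × ℤ)) (hF : ∀ q ∈ F, dyad q ⊆ dyad p) :
    ∑ q ∈ F, |hc (fun x => Real.sqrt (w x)) (dLeft q) *
        hc (fun x => (Real.sqrt (w x))⁻¹) q| ≤ Real.sqrt A * dLen p := by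
  have hleft : ∑ q ∈ F, hc (fun x => Real.sqrt (w x)) (dLeft q) ^ 2 ≤ ∫ x in dyad p, w x := by
    rw [← Finset.sum_image (f := fun r => hc (fun x => Real.sqrt (w x)) r ^ 2)
      dLeft_injective.injOn]
    refine sum_hc_sqrt_sq_le_setIntegral (fun x => (hw x).le) (integrableOn_dyad hwloc p) _ ?_
    simpa only [Finset.mem_image, forall_exists_index, and_imp, forall_apply_eq_imp_iff₂] using
      fun q hq => (dyad_dLeft_subset q).trans (hF q hq)
  have hinv : ∑ q ∈ F, hc (fun x => (Real.sqrt (w x))⁻¹) q ^ 2 ≤ ∫ x in dyad p, (w x)⁻¹ := by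
    simp only [← Real.sqrt_inv]
    exact sum_hc_sqrt_sq_le_setIntegral (fun x => (inv_pos.2 (hw x)).le)
      (integrableOn_dyad hwinv p) F hF
  calc ∑ q ∈ F, |hc (fun x => Real.sqrt (w x)) (dLeft q) * hc (fun x => (Real.sqrt (w x))⁻¹) q|
      ≤ Real.sqrt (∑ q ∈ F, hc (fun x => Real.sqrt (w x)) (dLeft q) ^ 2) *
          Real.sqrt (∑ q ∈ F, hc (fun x => (Real.sqrt (w x))⁻¹) q ^ 2) := by
        simpa only [abs_mul, sq_abs] using Real.sum_mul_le_sqrt_mul_sqrt F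
          (fun q => |hc (fun x => Real.sqrt (w x)) (dLeft q)|)
          (fun q => |hc (fun x => (Real.sqrt (w x))⁻¹) q|)
    _ ≤ Real.sqrt (∫ x in dyad p, w x) * Real.sqrt (∫ x in dyad p, (w x)⁻¹) := by gcongr
    _ = Real.sqrt ((∫ x in dyad p, w x) * ∫ x in dyad p, (w x)⁻¹) :=
        (Real.sqrt_mul (setIntegral_nonneg (measurableSet_dyad p) fun x _ => (hw x).le) _).symm
    _ ≤ Real.sqrt (A * dLen p ^ 2) :=
        Real.sqrt_le_sqrt (setIntegral_mul_setIntegral_le_of_avg_mul_avg_le (hA p))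
    _ = Real.sqrt A * dLen p := by
        rw [Real.sqrt_mul' _ (sq_nonneg _), Real.sqrt_sq (dLen_pos p).le]

/-- `Σ_{K⊆J} |⟨w^{1/2},h_{K₋}⟩ ⟨w^{-1/2},h_K⟩| ≤ [w]_{A₂}^{1/2} |J|`. -/
theorem statement8 (w : ℝ → ℝ) (hw : ∀ x, 0 < w x)
    (hwloc : LocallyIntegrable w volume)
    (hwinv : LocallyIntegrable (fun x => (w x)⁻¹) volume)
    (A : ℝ) (hA0 : 0 ≤ A)
    (hA : ∀ p : ℤ × ℤ, avg w p * avg (fun x => (w x)⁻¹) p ≤ A)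
    (p : ℤ × ℤ) (F : Finset (ℤ × ℤ)) (hF : ∀ q ∈ F, dyad q ⊆ dyad p) :
    ∑ q ∈ F, |hc (fun x => Real.sqrt (w x)) (dLeft q) *
        hc (fun x => (Real.sqrt (w x))⁻¹) q| ≤ Real.sqrt A * dLen p :=
  statement8_general w hw hwloc hwinv A hA p F hF
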